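/- If x^* minimizes ∑_m p_m/√(x_m) subject to ∑_m x_m ≤ C and 1 ≤ x_m ≤ K for all m, with p_1 > ⋯ > p_M > 0, then the set of indices where the cap is attained is an initial segment: {m : x_m^* = K} = {1, …, m₀ - 1} for some m₀. -/
import Mathlib


open Finset Real

/-- In any minimizer with strictly decreasing weights, the indices at the cap `K`
form an initial segment. -/
theorem capped_indices_prefix (M : ℕ) (C K : ℝ) (hK : 1 < K) (hC : (M : ℝ) ≤ C)
    (p : Fin M → ℝ) (hp : ∀ m, 0 < p m)
    (hdec : ∀ j k : Fin M, j < k → p k < p j)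
    (x : Fin M → ℝ)
    (hfeas : (∀ m, 1 ≤ x m ∧ x m ≤ K) ∧ ∑ m, x m ≤ C)
    (hopt : ∀ y : Fin M → ℝ, (∀ m, 1 ≤ y m ∧ y m ≤ K) → ∑ m, y m ≤ C →
      ∑ m, p m / Real.sqrt (x m) ≤ ∑ m, p m / Real.sqrt (y m)) :
    ∀ j k : Fin M, j < k → x k = K → x j = K := by
  intro j k hjk hxk
  by_contra hne
  obtain ⟨hbd, hsum⟩ := hfeas
  have hjne : j ≠ k := ne_of_lt hjk
  have hxjK : x j < K := lt_of_le_of_ne (hbd j).2 hne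
  -- the swapped point
  set y : Fin M → ℝ := fun m => x (Equiv.swap j k m) with hy
  have hyb : ∀ m, 1 ≤ y m ∧ y m ≤ K := fun m => hbd _
  have hysum : ∑ m, y m ≤ C := by
    have : ∑ m, y m = ∑ m, x m := Equiv.sum_comp (Equiv.swap j k) x
    rw [this]; exact hsum
  have hle := hopt y hyb hysum
  -- show strict inequality the other way
  have hxj1 : (1:ℝ) ≤ x j := (hbd j).1
  have hxj0 : 0 < x j := lt_of_lt_of_le one_pos hxj1
  have hsxj : 0 < Real.sqrt (x j) := Real.sqrt_pos.mpr hxj0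
  have hsK : Real.sqrt (x j) < Real.sqrt K :=
    Real.sqrt_lt_sqrt (le_of_lt hxj0) hxjK
  have hpdiff : 0 < p j - p k := sub_pos.mpr (hdec j k hjk)
  have hyj : y j = K := by simp [hy, Equiv.swap_apply_left, hxk]
  have hyk : y k = x j := by simp [hy, Equiv.swap_apply_right]
  have key : ∑ m, p m / Real.sqrt (y m) < ∑ m, p m / Real.sqrt (x m) := by
    have hjmem : j ∈ (univ : Finset (Fin M)) := mem_univ j
    have hkmem : k ∈ (univ : Finset (Fin M)).erase j :=
      mem_erase.mpr ⟨(ne_of_lt hjk).symm, mem_univ k⟩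
    have expand : ∀ f : Fin M → ℝ, ∑ m, f m = f j + (f k + ∑ m ∈ ((univ : Finset (Fin M)).erase j).erase k, f m) := by
      intro f
      rw [← Finset.add_sum_erase _ f hjmem, ← Finset.add_sum_erase _ f hkmem]
    rw [expand (fun m => p m / Real.sqrt (y m)), expand (fun m => p m / Real.sqrt (x m))]
    have hrest : ∑ m ∈ ((univ : Finset (Fin M)).erase j).erase k, p m / Real.sqrt (y m)
        = ∑ m ∈ ((univ : Finset (Fin M)).erase j).erase k, p m / Real.sqrt (x m) := by
      refine Finset.sum_congr rfl ?_
      intro m hm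
      have hmk : m ≠ k := (mem_erase.mp hm).1
      have hmj : m ≠ j := (mem_erase.mp (mem_erase.mp hm).2).1
      simp [hy, Equiv.swap_apply_of_ne_of_ne hmj hmk]
    rw [hrest]
    have hmain : p j / Real.sqrt (y j) + p k / Real.sqrt (y k)
        < p j / Real.sqrt (x j) + p k / Real.sqrt (x k) := by
      rw [hyj, hyk, hxk]
      have h1 : (p j - p k) / Real.sqrt K < (p j - p k) / Real.sqrt (x j) :=
        div_lt_div_of_pos_left hpdiff hsxj hsK
      rw [sub_div, sub_div] at h1
      linarith
    linarith [hmain]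
  exact absurd hle (not_le.mpr key)
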